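/- Let G be a connected graph on n ≥ 2 vertices. For real α, with S = min_i 𝔻_i, T = min_{i≠j} d_{ij}𝔻_jᵅ/𝔻_iᵅ, and (^α 𝕄)_i + 𝔻_i ordered nonincreasingly, one has: ρ(𝔻ℚ(G)) ≥ ((^α 𝕄)_n + 𝔻_n + S − T + √(((^α 𝕄)_n + 𝔻_n − S + T)² + 4T·Σ_{k=1}^{n−1}((^α 𝕄)_k + 𝔻_k − (^α 𝕄)_n − 𝔻_n)))/2. -/

import Mathlib

open Matrix Finset Real

/-- Spectral radius: largest modulus of a complex eigenvalue (root of the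
characteristic polynomial). -/
noncomputable def specRad {n : ℕ} (A : Matrix (Fin n) (Fin n) ℝ) : ℝ :=
  (((A.map (Complex.ofReal)).charpoly.roots).map (fun z => ‖z‖)).foldr max 0

/-- Irreducibility of a nonnegative matrix. -/
def Irred {n : ℕ} (A : Matrix (Fin n) (Fin n) ℝ) : Prop :=
  ∀ i j : Fin n, ∃ k : ℕ, 0 < (A ^ k) i j

/-!
Let `l` be the largest eigenvalue of `A = diag 𝔻 + 𝔻(G)`. Since `A` is symmetric and nonnegative,
`l` has a nonnegative eigenvector `z`, which is positive because off-diagonal distances are. Put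
`y_i = 𝔻_i ^ α`, `u_i = y_i z_i`, `r_i = (^α 𝕄)_i + 𝔻_i`, and let `u_m` be the least `u_i`.
Row `m` of `A z = l z`, multiplied by `y_m`, gives `T Σ u ≤ (l - S + T) u_m`. Summing all rows
weighted by `y` and using the symmetry of `𝔻(G)` gives
`l Σ u = Σ r_i u_i ≥ r_n Σ u + u_m Σ (r_i - r_n)`. Multiplying the two,
`T Σ (r_i - r_n) ≤ (l - r_n) (l - (S - T))` with `l ≥ r_n` and `l ≥ S - T`, so `l` is at least the
larger root of `(x - r_n) (x - (S - T)) = T Σ (r_i - r_n)`. Finally `l` is a root of the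
characteristic polynomial of `A`, so it is at most `specRad A`.
-/

theorem Multiset.le_foldr_max {α : Type*} [LinearOrder α] {s : Multiset α} {a : α} (b : α)
    (h : a ∈ s) : a ≤ s.foldr max b := by
  induction s using Multiset.induction_on with
  | empty => simp at h
  | cons c t ih =>
    rw [Multiset.foldr_cons]
    rcases Multiset.mem_cons.mp h with rfl | h
    · exact le_max_left _ _
    · exact (ih h).trans (le_max_right _ _)

theorem le_specRad_of_mem_spectrum {n : ℕ} {A : Matrix (Fin n) (Fin n) ℝ} {l : ℝ}
    (hl : l ∈ spectrum ℝ A) : l ≤ specRad A := by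
  have hroot : (l : ℂ) ∈ (A.map Complex.ofReal).charpoly.roots := by
    rw [Polynomial.mem_roots (charpoly_monic _).ne_zero]
    exact charpoly_map A Complex.ofRealHom ▸ (mem_spectrum_iff_isRoot_charpoly.mp hl).map
  calc l ≤ ‖(l : ℂ)‖ := by rw [Complex.norm_real]; exact le_abs_self l
    _ ≤ specRad A := Multiset.le_foldr_max _ (Multiset.mem_map_of_mem _ hroot)

section Perron

variable {ι : Type*} [Fintype ι]

theorem dotProduct_mulVec_le_abs {R : Type*} [CommRing R] [LinearOrder R] [IsStrictOrderedRing R]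
    {A : Matrix ι ι R} (hA : ∀ i j, 0 ≤ A i j) (v : ι → R) :
    v ⬝ᵥ (A *ᵥ v) ≤ |v| ⬝ᵥ (A *ᵥ |v|) := by
  simp only [dotProduct, mulVec, mul_sum]
  refine sum_le_sum fun i _ => sum_le_sum fun j _ => ?_
  calc v i * (A i j * v j) = A i j * (v i * v j) := by ring
    _ ≤ A i j * (|v i| * |v j|) := mul_le_mul_of_nonneg_left
      ((le_abs_self _).trans (abs_mul _ _).le) (hA i j)
    _ = |v| i * (A i j * |v| j) := by simp only [Pi.abs_apply]; ring

theorem pos_of_mulVec_eq_smul {R : Type*} [CommRing R] [LinearOrder R] [IsStrictOrderedRing R]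
    [DecidableEq ι] {A : Matrix ι ι R} (hA : ∀ i j, i ≠ j → 0 < A i j) {l : R} {z : ι → R}
    (hz0 : 0 ≤ z) (hz : z ≠ 0) (hAz : A *ᵥ z = l • z) (i : ι) : 0 < z i := by
  by_contra h
  have hzi : z i = 0 := le_antisymm (not_lt.mp h) (hz0 i)
  have hrow : ∑ j ∈ univ.erase i, A i j * z j = 0 := by
    rw [Finset.sum_erase (f := fun j => A i j * z j) _ (by simp [hzi])]
    have h := congrFun hAz i
    rwa [Pi.smul_apply, hzi, smul_zero] at h
  refine hz (funext fun j => ?_)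
  obtain rfl | hj := eq_or_ne j i
  · exact hzi
  have hterm := (sum_eq_zero_iff_of_nonneg fun k hk => mul_nonneg
    (hA i k (ne_of_mem_erase hk).symm).le (hz0 k)).mp hrow j (mem_erase.mpr ⟨hj, mem_univ _⟩)
  exact (mul_eq_zero.mp hterm).resolve_left (hA i j hj.symm).ne'

theorem Matrix.IsHermitian.posSemidef_smul_one_sub [DecidableEq ι] {A : Matrix ι ι ℝ}
    (hA : A.IsHermitian) {l : ℝ} (hl : ∀ μ ∈ spectrum ℝ A, μ ≤ l) : (l • 1 - A).PosSemidef := by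
  refine posSemidef_iff_isHermitian_and_spectrum_nonneg.mpr
    ⟨(isHermitian_one.smul (.all l)).sub hA, ?_⟩
  rw [← Algebra.algebraMap_eq_smul_one, ← spectrum.singleton_sub_eq]
  rintro _ ⟨_, rfl, μ, hμ, rfl⟩
  exact sub_nonneg.mpr (hl μ hμ)

theorem Matrix.IsHermitian.exists_nonneg_eigenvector [DecidableEq ι] [Nonempty ι]
    {A : Matrix ι ι ℝ} (hA : A.IsHermitian) (hnn : ∀ i j, 0 ≤ A i j) :
    ∃ l ∈ spectrum ℝ A, ∃ z : ι → ℝ, 0 ≤ z ∧ z ≠ 0 ∧ A *ᵥ z = l • z := by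
  obtain ⟨i₀, hi₀⟩ := Finite.exists_max hA.eigenvalues
  set l := hA.eigenvalues i₀
  set v : ι → ℝ := ⇑(hA.eigenvectorBasis i₀)
  have hv : A *ᵥ v = l • v := hA.mulVec_eigenvectorBasis i₀
  have hv0 : v ≠ 0 := fun h =>
    hA.eigenvectorBasis.orthonormal.ne_zero i₀ (by ext k; exact congrFun h k)
  have hB : (l • 1 - A).PosSemidef := hA.posSemidef_smul_one_sub fun μ hμ => by
    obtain ⟨i, rfl⟩ := hA.spectrum_real_eq_range_eigenvalues ▸ hμ
    exact hi₀ i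
  have hquad (x : ι → ℝ) : x ⬝ᵥ ((l • 1 - A) *ᵥ x) = l * (x ⬝ᵥ x) - x ⬝ᵥ (A *ᵥ x) := by
    rw [sub_mulVec, dotProduct_sub, smul_mulVec, one_mulVec, dotProduct_smul, smul_eq_mul]
  have hvv : |v| ⬝ᵥ |v| = v ⬝ᵥ v := by simp only [dotProduct, Pi.abs_apply, abs_mul_abs_self]
  have hzero : (l • 1 - A) *ᵥ |v| = 0 := by
    refine (hB.dotProduct_mulVec_zero_iff |v|).mp (le_antisymm ?_ (hB.dotProduct_mulVec_nonneg _))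
    rw [star_trivial, hquad, hvv]
    have := dotProduct_mulVec_le_abs hnn v
    rw [hv, dotProduct_smul, smul_eq_mul] at this
    linarith
  refine ⟨l, hA.eigenvalues_mem_spectrum_real i₀, |v|, abs_nonneg v, by simpa using hv0, ?_⟩
  rwa [sub_mulVec, smul_mulVec, one_mulVec, sub_eq_zero, eq_comm] at hzero

end Perron

theorem mul_sum_add_sum_sub_mul_le_sum_mul {ι R : Type*} [Fintype ι] [CommRing R] [LinearOrder R]
    [IsStrictOrderedRing R] {r u : ι → R} {p m : ι}
    (hr : ∀ i, r p ≤ r i) (hu : ∀ i, u m ≤ u i) :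
    r p * ∑ i, u i + (∑ i, (r i - r p)) * u m ≤ ∑ i, r i * u i := by
  rw [mul_sum, sum_mul, ← sum_add_distrib]
  exact sum_le_sum fun i _ => by
    nlinarith [mul_nonneg (sub_nonneg.mpr (hr i)) (sub_nonneg.mpr (hu i))]

theorem add_add_sqrt_div_two_le {a b c l : ℝ} (ha : a ≤ l) (hb : b ≤ l)
    (hc : c ≤ (l - a) * (l - b)) : (a + b + √((a - b) ^ 2 + 4 * c)) / 2 ≤ l := by
  have : √((a - b) ^ 2 + 4 * c) ≤ 2 * l - a - b :=
    Real.sqrt_le_iff.mpr ⟨by linarith, by nlinarith⟩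
  linarith

section Eigenvector

variable {ι : Type*} [Fintype ι] [DecidableEq ι] {d : Matrix ι ι ℝ} {D y z : ι → ℝ} {l : ℝ}

theorem mul_sum_le_of_mulVec_eq_smul (hsymm : d.IsSymm) (hdiag : ∀ i, d i i = 0)
    (hy : ∀ i, 0 < y i) (hz : 0 ≤ z) (hA : (diagonal D + d) *ᵥ z = l • z) {S T : ℝ}
    (hS : ∀ i, S ≤ D i) (hT : ∀ i j, i ≠ j → T ≤ d i j * y j / y i) (m : ι) :
    T * ∑ i, y i * z i ≤ (l - S + T) * (y m * z m) := by
  have hrow : l * z m = D m * z m + ∑ j, d m j * z j := by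
    have h := congrFun hA m
    simp only [add_mulVec, mulVec_diagonal, Pi.add_apply, Pi.smul_apply, smul_eq_mul] at h
    exact h.symm
  have hoff : T * (∑ i, y i * z i - y m * z m) ≤ y m * ∑ j, d m j * z j := by
    rw [← sum_erase_eq_sub (mem_univ m), mul_sum, mul_sum,
      ← Finset.sum_erase (f := fun j => y m * (d m j * z j)) (a := m) _ (by simp [hdiag])]
    refine sum_le_sum fun j hj => ?_
    calc T * (y j * z j) ≤ d j m * y m / y j * (y j * z j) :=
          mul_le_mul_of_nonneg_right (hT j m (ne_of_mem_erase hj))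
            (mul_nonneg (hy j).le (hz j))
      _ = y m * (d m j * z j) := by
          rw [hsymm.apply m j]; field_simp [(hy j).ne']
  have hSm : S * (y m * z m) ≤ D m * (y m * z m) :=
    mul_le_mul_of_nonneg_right (hS m) (mul_nonneg (hy m).le (hz m))
  linear_combination hoff + hSm - y m * hrow

theorem mul_sum_eq_sum_mul_of_mulVec_eq_smul (hsymm : d.IsSymm) (hy : ∀ i, y i ≠ 0)
    (hA : (diagonal D + d) *ᵥ z = l • z) :
    l * ∑ i, y i * z i = ∑ i, ((d *ᵥ y) i / y i + D i) * (y i * z i) := by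
  calc l * ∑ i, y i * z i = y ⬝ᵥ ((diagonal D + d) *ᵥ z) := by
        rw [hA, dotProduct_smul, smul_eq_mul]; rfl
    _ = (d *ᵥ y) ⬝ᵥ z + ∑ i, D i * (y i * z i) := by
        have hvec : y ᵥ* d = d *ᵥ y := by rw [← vecMul_transpose, hsymm.eq]
        rw [add_mulVec, dotProduct_add, dotProduct_mulVec y d, hvec, add_comm]
        congr 1
        simp only [mulVec_diagonal, dotProduct]
        exact sum_congr rfl fun i _ => by ring
    _ = ∑ i, ((d *ᵥ y) i / y i + D i) * (y i * z i) := by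
        rw [dotProduct, ← sum_add_distrib]
        exact sum_congr rfl fun i _ => by field_simp [hy i]

theorem add_add_sqrt_div_two_le_of_mulVec_eq_smul (hsymm : d.IsSymm) (hdiag : ∀ i, d i i = 0)
    (hy : ∀ i, 0 < y i) (hz : ∀ i, 0 < z i) (hA : (diagonal D + d) *ᵥ z = l • z)
    {M : ι → ℝ} (hM : ∀ i, M i = (d *ᵥ y) i / y i) {S T : ℝ} (hS : ∀ i, S ≤ D i)
    (hT0 : 0 ≤ T) (hT : ∀ i j, i ≠ j → T ≤ d i j * y j / y i) {p : ι}
    (hp : ∀ i, M p + D p ≤ M i + D i) :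
    (M p + D p + S - T + √((M p + D p - S + T) ^ 2 + 4 * T * ∑ k, (M k + D k - M p - D p)))
      / 2 ≤ l := by
  have : Nonempty ι := ⟨p⟩
  set a := M p + D p
  set σ := ∑ k, (M k + D k - (M p + D p))
  have hσ' : ∑ k, (M k + D k - M p - D p) = σ := sum_congr rfl fun _ _ => by ring
  set u := fun i => y i * z i
  set U := ∑ i, u i
  obtain ⟨m, hm⟩ := Finite.exists_min u
  have hu : 0 < u m := mul_pos (hy m) (hz m)
  have hU : 0 < U := sum_pos (fun i _ => mul_pos (hy i) (hz i)) univ_nonempty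
  have hσ : 0 ≤ σ := sum_nonneg fun k _ => by linarith [hp k]
  have h1 : T * U ≤ (l - S + T) * u m :=
    mul_sum_le_of_mulVec_eq_smul hsymm hdiag hy (fun i => (hz i).le) hA hS hT m
  have hl : l * U = ∑ i, (M i + D i) * u i := by
    rw [mul_sum_eq_sum_mul_of_mulVec_eq_smul hsymm (fun i => (hy i).ne') hA]
    exact sum_congr rfl fun i _ => by rw [hM]
  have h2 : a * U + σ * u m ≤ l * U :=
    hl ▸ mul_sum_add_sum_sub_mul_le_sum_mul (r := fun i => M i + D i) hp hm
  have hb : 0 ≤ l - S + T := nonneg_of_mul_nonneg_left ((mul_nonneg hT0 hU.le).trans h1) hu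
  have ha : a ≤ l := le_of_mul_le_mul_right (by nlinarith [mul_nonneg hσ hu.le]) hU
  have hc : T * σ * U ≤ (l - a) * (l - (S - T)) * U :=
    calc T * σ * U = σ * (T * U) := by ring
      _ ≤ σ * ((l - S + T) * u m) := mul_le_mul_of_nonneg_left h1 hσ
      _ = (l - S + T) * (σ * u m) := by ring
      _ ≤ (l - S + T) * ((l - a) * U) := mul_le_mul_of_nonneg_left (by linarith) hb
      _ = (l - a) * (l - (S - T)) * U := by ring
  rw [hσ']
  calc _ = (a + (S - T) + √((a - (S - T)) ^ 2 + 4 * (T * σ))) / 2 := by ring_nf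
    _ ≤ l := add_add_sqrt_div_two_le ha (by linarith) (le_of_mul_le_mul_right hc hU)

end Eigenvector

theorem stmt_19 {n : ℕ} (hn : 2 ≤ n) (G : SimpleGraph (Fin n)) (hconn : G.Connected)
    (α : ℝ) (D : Fin n → ℝ) (hD : ∀ i, D i = ∑ j, (G.dist i j : ℝ))
    (𝕄 : Fin n → ℝ)
    (h𝕄 : ∀ i, 𝕄 i = (∑ j, (G.dist i j : ℝ) * (D j) ^ α) / (D i) ^ α)
    (hord : ∀ i j : Fin n, i ≤ j → 𝕄 j + D j ≤ 𝕄 i + D i)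
    (S : ℝ) (hS : IsLeast {x | ∃ i, x = D i} S)
    (T : ℝ)
    (hT : IsLeast {x | ∃ i j : Fin n, i ≠ j ∧ x = (G.dist i j : ℝ) * (D j) ^ α / (D i) ^ α} T) :
    specRad (Matrix.diagonal D + Matrix.of fun i j : Fin n => (G.dist i j : ℝ)) ≥
      (𝕄 ⟨n - 1, by omega⟩ + D ⟨n - 1, by omega⟩ + S - T +
        Real.sqrt ((𝕄 ⟨n - 1, by omega⟩ + D ⟨n - 1, by omega⟩ - S + T) ^ 2 +
          4 * T * ∑ k ∈ Finset.Iio (⟨n - 1, by omega⟩ : Fin n),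
            (𝕄 k + D k - 𝕄 ⟨n - 1, by omega⟩ - D ⟨n - 1, by omega⟩))) / 2 := by
  set last : Fin n := ⟨n - 1, by omega⟩
  set d : Matrix (Fin n) (Fin n) ℝ := of fun i j => (G.dist i j : ℝ)
  have hdist : ∀ i j, i ≠ j → 0 < d i j := fun i j h => by
    simpa [d] using hconn.pos_dist_of_ne h
  have hsymm : d.IsSymm := IsSymm.ext fun i j => by simp [d, SimpleGraph.dist_comm]
  have : Nontrivial (Fin n) := Fin.nontrivial_iff_two_le.mpr hn
  have hDpos : ∀ i, 0 < D i := fun i => by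
    obtain ⟨j, hj⟩ := exists_ne i
    rw [hD]
    exact sum_pos' (fun _ _ => Nat.cast_nonneg _) ⟨j, mem_univ _, hdist i j hj.symm⟩
  have hy : ∀ i, 0 < D i ^ α := fun i => rpow_pos_of_pos (hDpos i) α
  have hA : (diagonal D + d).IsHermitian :=
    isHermitian_iff_isSymm.mpr ((isSymm_diagonal D).add hsymm)
  obtain ⟨l, hl, z, hz0, hz, hAz⟩ := hA.exists_nonneg_eigenvector fun i j => by
    obtain rfl | h := eq_or_ne i j
    · simp [d, (hDpos i).le]
    · simp [d, h]
  have hzpos := pos_of_mulVec_eq_smul (fun i j h => by simpa [h] using hdist i j h) hz0 hz hAz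
  have hT0 : 0 ≤ T := by
    obtain ⟨i, j, -, rfl⟩ := hT.1
    exact div_nonneg (mul_nonneg (Nat.cast_nonneg _) (hy j).le) (hy i).le
  have hlast : ∀ i, i ≤ last := fun i => Fin.le_def.mpr (Nat.le_sub_one_of_lt i.isLt)
  have hIio : ∑ k ∈ Iio last, (𝕄 k + D k - 𝕄 last - D last) =
      ∑ k, (𝕄 k + D k - 𝕄 last - D last) :=
    sum_subset (subset_univ _) fun k _ hk => by
      rw [le_antisymm (hlast k) (not_lt.mp (by simpa using hk))]
      ring
  rw [hIio, ge_iff_le]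
  refine le_trans ?_ (le_specRad_of_mem_spectrum hl)
  exact add_add_sqrt_div_two_le_of_mulVec_eq_smul hsymm (fun i => by simp [d]) hy hzpos hAz
    h𝕄 (fun i => hS.2 ⟨i, rfl⟩) hT0 (fun i j h => hT.2 ⟨i, j, h, rfl⟩)
    (fun i => hord i last (hlast i))
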